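/- Let < be a monomial preorder on k[x_1,...,x_n] and let J ⊆ I be ideals of the localization k[X]_<. If the leading ideals coincide, L_<(J) = L_<(I), then J = I. -/

import Mathlib

open MvPolynomial

structure MonomialPreorder (n : ℕ) where
  lt : (Fin n →₀ ℕ) → (Fin n →₀ ℕ) → Prop
  irrefl : ∀ a, ¬ lt a a
  trans : ∀ {a b c}, lt a b → lt b c → lt a c
  weak : ∀ {a b c}, (¬ lt a b ∧ ¬ lt b a) → (¬ lt b c ∧ ¬ lt c b) → ¬ lt a c ∧ ¬ lt c a
  compat : ∀ {a b} (c), lt a b → lt (a + c) (b + c)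
  cancel : ∀ {a b} (c), lt (a + c) (b + c) → lt a b

variable {n : ℕ} {k : Type*} [Field k]

open Classical in
noncomputable def leadingPart (P : MonomialPreorder n) (f : MvPolynomial (Fin n) k) :
    MvPolynomial (Fin n) k :=
  ∑ a ∈ f.support.filter (fun a => ∀ b ∈ f.support, ¬ P.lt a b),
    monomial a (coeff a f)

noncomputable def Sles (k : Type*) [Field k] (P : MonomialPreorder n) : Submonoid (MvPolynomial (Fin n) k) :=
  Submonoid.closure {u | leadingPart P u = 1}

abbrev Loc (k : Type*) [Field k] (P : MonomialPreorder n) := Localization (Sles k P)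

noncomputable def leadingIdealWrt (P Q : MonomialPreorder n) (G : Set (Loc k P)) :
    Ideal (MvPolynomial (Fin n) k) :=
  Ideal.span {q | ∃ f ∈ G, ∃ u p : MvPolynomial (Fin n) k, leadingPart P u = 1 ∧
    algebraMap (MvPolynomial (Fin n) k) (Loc k P) p = algebraMap (MvPolynomial (Fin n) k) (Loc k P) u * f ∧
    q = leadingPart Q p}

noncomputable def leadingIdeal (P : MonomialPreorder n) (G : Set (Loc k P)) :
    Ideal (MvPolynomial (Fin n) k) := leadingIdealWrt P P G

noncomputable def leadingIdealPoly (P : MonomialPreorder n) (Q : Set (MvPolynomial (Fin n) k)) :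
    Ideal (MvPolynomial (Fin n) k) :=
  Ideal.span (leadingPart P '' Q)

namespace MonomialPreorder

variable (P : MonomialPreorder n)

/-- the equivalence of `P`-incomparable monomials -/
def eqv (a b : Fin n →₀ ℕ) : Prop := ¬ P.lt a b ∧ ¬ P.lt b a

lemma eqv_refl (a) : P.eqv a a := ⟨P.irrefl a, P.irrefl a⟩

lemma eqv_symm {a b} (h : P.eqv a b) : P.eqv b a := ⟨h.2, h.1⟩

lemma eqv_trans {a b c} (h1 : P.eqv a b) (h2 : P.eqv b c) : P.eqv a c := P.weak h1 h2

lemma lt_of_eqv_lt {a b c} (he : P.eqv a b) (hl : P.lt b c) : P.lt a c := by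
  by_contra hac
  by_cases hca : P.lt c a
  · exact he.2 (P.trans hl hca)
  · exact (P.eqv_trans (P.eqv_symm he) ⟨hac, hca⟩).1 hl

lemma lt_of_lt_eqv {a b c} (hl : P.lt a b) (he : P.eqv b c) : P.lt a c := by
  by_contra hac
  by_cases hca : P.lt c a
  · exact he.2 (P.trans hca hl)
  · exact (P.eqv_trans he ⟨hca, hac⟩).2 hl

lemma eqv_add {a b} (c) (h : P.eqv a b) : P.eqv (a + c) (b + c) :=
  ⟨fun hl => h.1 (P.cancel c hl), fun hl => h.2 (P.cancel c hl)⟩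

lemma eqv_cancel {a b} (c) (h : P.eqv (a + c) (b + c)) : P.eqv a b :=
  ⟨fun hl => h.1 (P.compat c hl), fun hl => h.2 (P.compat c hl)⟩

/-- every nonempty finite set has a `P`-maximal element -/
lemma exists_max (s : Finset (Fin n →₀ ℕ)) (hs : s.Nonempty) :
    ∃ a ∈ s, ∀ b ∈ s, ¬ P.lt a b := by
  classical
  induction s using Finset.induction with
  | empty => exact absurd hs (by simp)
  | @insert x s hx ih =>
    rcases s.eq_empty_or_nonempty with rfl | hsne
    · exact ⟨x, by simp, by simp [P.irrefl]⟩
    · obtain ⟨a, ha, hmax⟩ := ih hsne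
      by_cases hax : P.lt a x
      · refine ⟨x, Finset.mem_insert_self _ _, ?_⟩
        intro b hb
        rcases Finset.mem_insert.1 hb with rfl | hb
        · exact P.irrefl b
        · exact fun hxb => hmax b hb (P.trans hax hxb)
      · refine ⟨a, Finset.mem_insert_of_mem ha, ?_⟩
        intro b hb
        rcases Finset.mem_insert.1 hb with rfl | hb
        · exact hax
        · exact hmax b hb

end MonomialPreorder

section LexStuff

/-- lex tiebreak -/
def lexlt (a b : Fin n →₀ ℕ) : Prop := toLex a < toLex b

lemma lexlt_trans {a b c : Fin n →₀ ℕ} (h1 : lexlt a b) (h2 : lexlt b c) : lexlt a c :=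
  lt_trans h1 h2

lemma lexlt_irrefl (a : Fin n →₀ ℕ) : ¬ lexlt a a := lt_irrefl _

lemma lexlt_asymm {a b : Fin n →₀ ℕ} (h : lexlt a b) : ¬ lexlt b a := fun h2 => lexlt_irrefl a (lexlt_trans h h2)

lemma lexlt_total {a b : Fin n →₀ ℕ} (h : a ≠ b) : lexlt a b ∨ lexlt b a := by
  rcases lt_trichotomy (toLex a) (toLex b) with h1 | h1 | h1
  · exact Or.inl h1
  · exact absurd (toLex.injective h1) h
  · exact Or.inr h1

lemma lexlt_add {a b : Fin n →₀ ℕ} (c) (h : lexlt a b) : lexlt (a + c) (b + c) := by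
  rw [lexlt, Finsupp.Lex.lt_iff] at h ⊢
  obtain ⟨i, h1, h2⟩ := h
  refine ⟨i, fun j hj => ?_, ?_⟩
  · have := h1 j hj
    simp only [ofLex_toLex, Finsupp.add_apply] at this ⊢
    omega
  · simp only [ofLex_toLex, Finsupp.add_apply] at h2 ⊢
    omega

lemma lexlt_cancel {a b : Fin n →₀ ℕ} (c) (h : lexlt (a + c) (b + c)) : lexlt a b := by
  rcases eq_or_ne a b with rfl | hne
  · exact absurd h (lexlt_irrefl _)
  rcases lexlt_total hne with h1 | h1
  · exact h1
  · exact absurd (lexlt_add c h1) (lexlt_asymm h)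

lemma lexlt_zero {b : Fin n →₀ ℕ} (h : b ≠ 0) : lexlt 0 b := by
  rw [lexlt, Finsupp.Lex.lt_iff]
  have hne : b.support.Nonempty := Finsupp.support_nonempty_iff.2 h
  refine ⟨b.support.min' hne, fun j hj => ?_, ?_⟩
  · simp only [ofLex_toLex, Finsupp.coe_zero, Pi.zero_apply]
    by_contra hbj
    have : j ∈ b.support := Finsupp.mem_support_iff.2 fun h0 => hbj h0.symm
    exact absurd (b.support.min'_le j this) (not_le.2 hj)
  · simp only [ofLex_toLex, Finsupp.coe_zero, Pi.zero_apply]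
    have : b.support.min' hne ∈ b.support := b.support.min'_mem hne
    exact Nat.pos_of_ne_zero (Finsupp.mem_support_iff.1 this)

end LexStuff

namespace MonomialPreorder

variable (P : MonomialPreorder n)

/-- the total refinement of `P` by the lex tiebreak -/
def Ord : MonomialPreorder n where
  lt a b := P.lt a b ∨ (P.eqv a b ∧ lexlt a b)
  irrefl a := by
    rintro (h | ⟨-, h⟩)
    · exact P.irrefl a h
    · exact lexlt_irrefl a h
  trans {a b c} := by
    rintro (h1 | ⟨he1, hl1⟩) (h2 | ⟨he2, hl2⟩)
    · exact Or.inl (P.trans h1 h2)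
    · exact Or.inl (P.lt_of_lt_eqv h1 he2)
    · exact Or.inl (P.lt_of_eqv_lt he1 h2)
    · exact Or.inr ⟨P.eqv_trans he1 he2, lexlt_trans hl1 hl2⟩
  weak {a b c} h1 h2 := by
    have hab : a = b := by
      by_contra hne
      rcases lexlt_total hne with hl | hl
      · by_cases hP : P.lt a b
        · exact h1.1 (Or.inl hP)
        · by_cases hP2 : P.lt b a
          · exact h1.2 (Or.inl hP2)
          · exact h1.1 (Or.inr ⟨⟨hP, hP2⟩, hl⟩)
      · by_cases hP : P.lt b a
        · exact h1.2 (Or.inl hP)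
        · by_cases hP2 : P.lt a b
          · exact h1.1 (Or.inl hP2)
          · exact h1.2 (Or.inr ⟨⟨hP, hP2⟩, hl⟩)
    have hbc : b = c := by
      by_contra hne
      rcases lexlt_total hne with hl | hl
      · by_cases hP : P.lt b c
        · exact h2.1 (Or.inl hP)
        · by_cases hP2 : P.lt c b
          · exact h2.2 (Or.inl hP2)
          · exact h2.1 (Or.inr ⟨⟨hP, hP2⟩, hl⟩)
      · by_cases hP : P.lt c b
        · exact h2.2 (Or.inl hP)
        · by_cases hP2 : P.lt b c
          · exact h2.1 (Or.inl hP2)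
          · exact h2.2 (Or.inr ⟨⟨hP, hP2⟩, hl⟩)
    subst hab; subst hbc
    constructor <;>
    · rintro (h | ⟨-, h⟩)
      · exact P.irrefl a h
      · exact lexlt_irrefl a h
  compat {a b} c := by
    rintro (h | ⟨he, hl⟩)
    · exact Or.inl (P.compat c h)
    · exact Or.inr ⟨P.eqv_add c he, lexlt_add c hl⟩
  cancel {a b} c := by
    rintro (h | ⟨he, hl⟩)
    · exact Or.inl (P.cancel c h)
    · exact Or.inr ⟨P.eqv_cancel c he, lexlt_cancel c hl⟩

lemma Ord_total {a b : Fin n →₀ ℕ} (h : a ≠ b) : P.Ord.lt a b ∨ P.Ord.lt b a := by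
  by_cases hP : P.lt a b
  · exact Or.inl (Or.inl hP)
  by_cases hP2 : P.lt b a
  · exact Or.inr (Or.inl hP2)
  rcases lexlt_total h with hl | hl
  · exact Or.inl (Or.inr ⟨⟨hP, hP2⟩, hl⟩)
  · exact Or.inr (Or.inr ⟨⟨hP2, hP⟩, hl⟩)

lemma Ord_asymm {a b : Fin n →₀ ℕ} (h : P.Ord.lt a b) : ¬ P.Ord.lt b a :=
  fun h2 => P.Ord.irrefl a (P.Ord.trans h h2)

lemma lt_Ord {a b : Fin n →₀ ℕ} (h : P.lt a b) : P.Ord.lt a b := Or.inl h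

end MonomialPreorder

----------------------------------------------------------------
-- Part B : leadingPart lemmas and leading monomials for Ord
----------------------------------------------------------------

section PartB

variable (P : MonomialPreorder n)

open Classical in
lemma coeff_leadingPart (f : MvPolynomial (Fin n) k) (b : Fin n →₀ ℕ) :
    coeff b (leadingPart P f) =
      if b ∈ f.support ∧ ∀ c ∈ f.support, ¬ P.lt b c then coeff b f else 0 := by
  classical
  rw [leadingPart, coeff_sum]
  have : ∀ a ∈ f.support.filter (fun a => ∀ b ∈ f.support, ¬ P.lt a b),
      coeff b (monomial a (coeff a f)) = if a = b then coeff a f else 0 := by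
    intro a _; rw [coeff_monomial]
  rw [Finset.sum_congr rfl this, Finset.sum_ite_eq']
  simp only [Finset.mem_filter]

lemma leadingPart_ne_zero {f : MvPolynomial (Fin n) k} (hf : f ≠ 0) :
    leadingPart P f ≠ 0 := by
  obtain ⟨a, ha, hmax⟩ := P.exists_max f.support (MvPolynomial.support_nonempty.2 hf)
  intro h0
  have := coeff_leadingPart P f a
  rw [h0, if_pos ⟨ha, hmax⟩] at this
  exact (Finsupp.mem_support_iff.1 ha) this.symm

lemma leadingPart_one : leadingPart P (1 : MvPolynomial (Fin n) k) = 1 := by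
  classical
  have hsupp : (1 : MvPolynomial (Fin n) k).support = {0} := by
    have : (1 : MvPolynomial (Fin n) k) = monomial 0 1 := by
      simp [monomial_zero']
    rw [this, support_monomial, if_neg (one_ne_zero)]
  rw [leadingPart]
  have hfil : (1 : MvPolynomial (Fin n) k).support.filter
      (fun a => ∀ b ∈ (1 : MvPolynomial (Fin n) k).support, ¬ P.lt a b) = {0} := by
    rw [hsupp]
    ext a
    simp only [Finset.mem_filter, Finset.mem_singleton]
    constructor
    · rintro ⟨rfl, -⟩; rfl
    · rintro rfl
      refine ⟨rfl, fun b hb => ?_⟩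
      subst hb; exact P.irrefl 0
  rw [hfil, Finset.sum_singleton]
  simp [monomial_zero']

/-- existence of the strict maximum monomial under `Ord` -/
lemma exists_lm {f : MvPolynomial (Fin n) k} (hf : f ≠ 0) :
    ∃ a, a ∈ f.support ∧ ∀ b ∈ f.support, b ≠ a → P.Ord.lt b a := by
  obtain ⟨a, ha, hmax⟩ := P.Ord.exists_max f.support (MvPolynomial.support_nonempty.2 hf)
  refine ⟨a, ha, fun b hb hne => ?_⟩
  rcases P.Ord_total hne with h | h
  · exact h
  · exact absurd h (hmax b hb)

open Classical in
noncomputable def lmO (f : MvPolynomial (Fin n) k) : Fin n →₀ ℕ :=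
  if hf : f = 0 then 0 else Classical.choose (exists_lm P hf)

lemma lmO_mem {f : MvPolynomial (Fin n) k} (hf : f ≠ 0) : lmO P f ∈ f.support := by
  rw [lmO, dif_neg hf]; exact (Classical.choose_spec (exists_lm P hf)).1

lemma lmO_max {f : MvPolynomial (Fin n) k} (hf : f ≠ 0) :
    ∀ b ∈ f.support, b ≠ lmO P f → P.Ord.lt b (lmO P f) := by
  rw [lmO, dif_neg hf]; exact (Classical.choose_spec (exists_lm P hf)).2

lemma lmO_not_lt {f : MvPolynomial (Fin n) k} (hf : f ≠ 0) :
    ∀ b ∈ f.support, ¬ P.Ord.lt (lmO P f) b := by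
  intro b hb hlt
  rcases eq_or_ne b (lmO P f) with rfl | hne
  · exact P.Ord.irrefl _ hlt
  · exact P.Ord.irrefl _ (P.Ord.trans hlt (lmO_max P hf b hb hne))

lemma lmO_unique {f : MvPolynomial (Fin n) k} (hf : f ≠ 0) {a : Fin n →₀ ℕ}
    (ha : a ∈ f.support) (hmax : ∀ b ∈ f.support, b ≠ a → P.Ord.lt b a) :
    a = lmO P f := by
  by_contra hne
  exact P.Ord_asymm (lmO_max P hf a ha hne)
    (hmax (lmO P f) (lmO_mem P hf) (fun h => hne h.symm))

/-- leading coefficient -/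
noncomputable def lcO (f : MvPolynomial (Fin n) k) : k := coeff (lmO P f) f

lemma lcO_ne_zero {f : MvPolynomial (Fin n) k} (hf : f ≠ 0) : lcO P f ≠ 0 :=
  Finsupp.mem_support_iff.1 (lmO_mem P hf)

lemma leadingPart_Ord_eq {f : MvPolynomial (Fin n) k} (hf : f ≠ 0) :
    leadingPart P.Ord f = monomial (lmO P f) (lcO P f) := by
  classical
  apply MvPolynomial.ext
  intro b
  rw [coeff_leadingPart, coeff_monomial]
  by_cases hb : b = lmO P f
  · subst hb
    rw [if_pos ⟨lmO_mem P hf, lmO_not_lt P hf⟩, if_pos rfl]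
    rfl
  · have hcond : ¬ (b ∈ f.support ∧ ∀ c ∈ f.support, ¬ P.Ord.lt b c) := by
      rintro ⟨hbs, hmax⟩
      exact hmax (lmO P f) (lmO_mem P hf) (lmO_max P hf b hbs hb)
    rw [if_neg hcond, if_neg (fun h => hb h.symm)]

end PartB

----------------------------------------------------------------
-- Part C : units, restrictions, key product lemma
----------------------------------------------------------------

section PartC

variable (P : MonomialPreorder n)

lemma leadingPart_Ord_one_of {u : MvPolynomial (Fin n) k}
    (h0 : coeff 0 u = 1) (hlt : ∀ b ∈ u.support, b ≠ 0 → P.Ord.lt b 0) :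
    leadingPart P.Ord u = 1 := by
  have hu : u ≠ 0 := by
    intro h
    rw [h, coeff_zero] at h0
    exact one_ne_zero h0.symm
  have h0mem : (0 : Fin n →₀ ℕ) ∈ u.support :=
    MvPolynomial.mem_support_iff.2 (by rw [h0]; exact one_ne_zero)
  have hlm : (0 : Fin n →₀ ℕ) = lmO P u :=
    lmO_unique P hu h0mem (fun b hb hne => hlt b hb hne)
  rw [leadingPart_Ord_eq P hu, lcO, ← hlm, h0]
  simp [monomial_zero']

lemma leadingPart_Ord_one_elim {u : MvPolynomial (Fin n) k}
    (h : leadingPart P.Ord u = 1) :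
    coeff 0 u = 1 ∧ ∀ b ∈ u.support, b ≠ 0 → P.Ord.lt b 0 := by
  have hu : u ≠ 0 := by
    rintro rfl
    rw [leadingPart] at h
    simp only [MvPolynomial.support_zero, Finset.filter_empty, Finset.sum_empty] at h
    exact one_ne_zero h.symm
  rw [leadingPart_Ord_eq P hu] at h
  have hc : lcO P u ≠ 0 := lcO_ne_zero P hu
  have h1 : (1 : MvPolynomial (Fin n) k) = monomial 0 1 := by simp [monomial_zero']
  rw [h1] at h
  have hlm : lmO P u = 0 := by
    classical
    by_contra hne
    have := congrArg (coeff (lmO P u)) h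
    rw [coeff_monomial, coeff_monomial, if_pos rfl, if_neg (fun hx => hne hx.symm)] at this
    exact hc this
  have hco : lcO P u = 1 := by
    classical
    have := congrArg (coeff 0) h
    rw [coeff_monomial, coeff_monomial, if_pos (by rw [hlm]), if_pos rfl] at this
    exact this
  constructor
  · rw [lcO, hlm] at hco; exact hco
  · intro b hb hne
    have := lmO_max P hu b hb (by rw [hlm]; exact hne)
    rwa [hlm] at this

lemma leadingPart_one_of_Ord_one {u : MvPolynomial (Fin n) k}
    (h : leadingPart P.Ord u = 1) : leadingPart P u = 1 := by
  classical
  obtain ⟨h0, hlt⟩ := leadingPart_Ord_one_elim P h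
  have h0mem : (0 : Fin n →₀ ℕ) ∈ u.support :=
    MvPolynomial.mem_support_iff.2 (by rw [h0]; exact one_ne_zero)
  have hmax0 : ∀ c ∈ u.support, ¬ P.lt 0 c := by
    intro c hc hltc
    rcases eq_or_ne c 0 with rfl | hne
    · exact P.irrefl 0 hltc
    · exact P.Ord_asymm (hlt c hc hne) (P.lt_Ord hltc)
  apply MvPolynomial.ext
  intro b
  rw [coeff_leadingPart]
  rcases eq_or_ne b 0 with rfl | hne
  · rw [if_pos ⟨h0mem, hmax0⟩, h0]
    rw [show (1 : MvPolynomial (Fin n) k) = monomial 0 1 by simp [monomial_zero'],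
      coeff_monomial, if_pos rfl]
  · have hcond : ¬ (b ∈ u.support ∧ ∀ c ∈ u.support, ¬ P.lt b c) := by
      rintro ⟨hb, hmaxb⟩
      rcases hlt b hb hne with hPb | ⟨heqv, hlex⟩
      · exact hmaxb 0 h0mem hPb
      · exact lexlt_asymm (lexlt_zero hne) hlex
    rw [if_neg hcond,
      show (1 : MvPolynomial (Fin n) k) = monomial 0 1 by simp [monomial_zero'],
      coeff_monomial, if_neg (fun hx => hne hx.symm)]

lemma mem_support_leadingPart {f : MvPolynomial (Fin n) k} {b : Fin n →₀ ℕ} :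
    b ∈ (leadingPart P f).support ↔ b ∈ f.support ∧ ∀ c ∈ f.support, ¬ P.lt b c := by
  rw [MvPolynomial.mem_support_iff, coeff_leadingPart]
  constructor
  · intro h
    by_contra hc
    rw [if_neg hc] at h
    exact h rfl
  · intro hc
    rw [if_pos hc]
    exact MvPolynomial.mem_support_iff.1 hc.1

lemma lmO_is_P_max {f : MvPolynomial (Fin n) k} (hf : f ≠ 0) :
    ∀ b ∈ f.support, ¬ P.lt (lmO P f) b := by
  intro b hb hlt
  exact lmO_not_lt P hf b hb (P.lt_Ord hlt)

lemma eqv_of_both_max {f : MvPolynomial (Fin n) k} {a b : Fin n →₀ ℕ}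
    (ha : a ∈ f.support) (hb : b ∈ f.support)
    (hamax : ∀ c ∈ f.support, ¬ P.lt a c) (hbmax : ∀ c ∈ f.support, ¬ P.lt b c) :
    P.eqv a b := ⟨hamax b hb, hbmax a ha⟩

lemma lmO_leadingPart {f : MvPolynomial (Fin n) k} (hf : f ≠ 0) :
    lmO P (leadingPart P f) = lmO P f := by
  have hL : leadingPart P f ≠ 0 := leadingPart_ne_zero P hf
  symm
  apply lmO_unique P hL
  · exact (mem_support_leadingPart P).2 ⟨lmO_mem P hf, lmO_is_P_max P hf⟩
  · intro b hb hne
    have hb' := (mem_support_leadingPart P).1 hb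
    exact lmO_max P hf b hb'.1 hne

lemma lcO_leadingPart {f : MvPolynomial (Fin n) k} (hf : f ≠ 0) :
    lcO P (leadingPart P f) = lcO P f := by
  rw [lcO, lcO, lmO_leadingPart P hf, coeff_leadingPart,
    if_pos ⟨lmO_mem P hf, lmO_is_P_max P hf⟩]

open Classical in
noncomputable def restr (s : (Fin n →₀ ℕ) → Prop) (f : MvPolynomial (Fin n) k) :
    MvPolynomial (Fin n) k :=
  ∑ a ∈ f.support.filter s, monomial a (coeff a f)

open Classical in
lemma coeff_restr (s : (Fin n →₀ ℕ) → Prop) (f : MvPolynomial (Fin n) k) (b : Fin n →₀ ℕ) :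
    coeff b (restr s f) = if s b then coeff b f else 0 := by
  classical
  rw [restr, coeff_sum]
  have : ∀ a ∈ f.support.filter s,
      coeff b (monomial a (coeff a f)) = if a = b then coeff a f else 0 := by
    intro a _; rw [coeff_monomial]
  rw [Finset.sum_congr rfl this, Finset.sum_ite_eq']
  simp only [Finset.mem_filter]
  by_cases hs : s b
  · by_cases hb : b ∈ f.support
    · rw [if_pos ⟨hb, hs⟩, if_pos hs]
    · rw [if_neg (fun h => hb h.1), if_pos hs,
        (MvPolynomial.notMem_support_iff.1 hb : coeff b f = 0)]
  · rw [if_neg (fun h => hs h.2), if_neg hs]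

lemma mem_support_restr {s : (Fin n →₀ ℕ) → Prop} {f : MvPolynomial (Fin n) k}
    {b : Fin n →₀ ℕ} (hb : b ∈ (restr s f).support) : s b ∧ b ∈ f.support := by
  rw [MvPolynomial.mem_support_iff, coeff_restr] at hb
  by_cases hs : s b
  · rw [if_pos hs] at hb
    exact ⟨hs, MvPolynomial.mem_support_iff.2 hb⟩
  · rw [if_neg hs] at hb; exact absurd rfl hb

lemma key_coeff (γ : Fin n →₀ ℕ) {g : MvPolynomial (Fin n) k} (hg : g ≠ 0)
    (c : MvPolynomial (Fin n) k) {μ : Fin n →₀ ℕ} (hμ : P.eqv μ γ) :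
    coeff μ (restr (fun b => P.eqv (b + lmO P g) γ) c * g) =
    coeff μ (c * leadingPart P g) := by
  classical
  rw [coeff_mul, coeff_mul]
  apply Finset.sum_congr rfl
  rintro ⟨b, b'⟩ hmem
  have hbb' : b + b' = μ := Finset.HasAntidiagonal.mem_antidiagonal.1 hmem
  simp only
  rw [coeff_restr, coeff_leadingPart]
  by_cases hb' : b' ∈ g.support
  · have hiff : P.eqv (b + lmO P g) γ ↔ ∀ c ∈ g.support, ¬ P.lt b' c := by
      constructor
      · intro he
        -- b + b' ~ γ ~ b + lm g  ⇒  b' ~ lm g  ⇒  b' maximal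
        have h1 : P.eqv (b + b') (b + lmO P g) := by
          refine P.eqv_trans ?_ (P.eqv_symm he)
          rw [hbb']; exact hμ
        have h1' : P.eqv (b' + b) (lmO P g + b) := by
          rwa [add_comm b' b, add_comm (lmO P g) b]
        have h2 : P.eqv b' (lmO P g) := P.eqv_cancel b h1'
        intro c hc hltc
        exact lmO_is_P_max P hg c hc (P.lt_of_eqv_lt (P.eqv_symm h2) hltc)
      · intro hmax
        have h2 : P.eqv b' (lmO P g) :=
          eqv_of_both_max P hb' (lmO_mem P hg) hmax (lmO_is_P_max P hg)
        have h3 : P.eqv (b' + b) (lmO P g + b) := P.eqv_add b h2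
        rw [add_comm b' b, add_comm (lmO P g) b] at h3
        refine P.eqv_trans (P.eqv_symm h3) ?_
        rw [hbb']; exact hμ
    by_cases hcond : P.eqv (b + lmO P g) γ
    · rw [if_pos hcond, if_pos ⟨hb', hiff.1 hcond⟩]
    · rw [if_neg hcond, if_neg (fun h : _ ∧ _ => hcond (hiff.2 h.2)), zero_mul, mul_zero]
  · have hzero : coeff b' g = 0 := MvPolynomial.notMem_support_iff.1 hb'
    rw [if_neg (fun h : _ ∧ _ => hb' h.1), hzero, mul_zero, mul_zero]

end PartC

----------------------------------------------------------------
-- Part D : transfer lemma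
----------------------------------------------------------------

section PartD

variable (P : MonomialPreorder n)

theorem exists_same_leading (A : Ideal (MvPolynomial (Fin n) k)) {p : MvPolynomial (Fin n) k}
    (hp0 : p ≠ 0)
    (hp : leadingPart P p ∈ Ideal.span (leadingPart P (k := k) '' (A : Set (MvPolynomial (Fin n) k)))) :
    ∃ g ∈ A, g ≠ 0 ∧ lmO P g = lmO P p ∧ lcO P g = lcO P p := by
  classical
  set q := leadingPart P p with hqdef
  have hq0 : q ≠ 0 := leadingPart_ne_zero P hp0
  set γ := lmO P p with hγdef
  obtain ⟨N, c, s, hsum⟩ := Submodule.mem_span_set'.1 hp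
  -- choose preimages
  have hschoice : ∀ i : Fin N, ∃ g, g ∈ A ∧ leadingPart P g = (s i : MvPolynomial (Fin n) k) := by
    intro i
    obtain ⟨g, hg, hg2⟩ := (s i).2
    exact ⟨g, hg, hg2⟩
  choose g' hg'A hg'L using hschoice
  set d : Fin N → MvPolynomial (Fin n) k :=
    fun i => restr (fun b => P.eqv (b + lmO P (g' i)) γ) (c i) with hddef
  set gstar : MvPolynomial (Fin n) k := ∑ i, d i * g' i with hgsdef
  have hgsA : gstar ∈ A := Submodule.sum_mem _ (fun i _ => A.mul_mem_left _ (hg'A i))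
  -- claim 1 : coefficients agree on the class of γ
  have claim1 : ∀ μ, P.eqv μ γ → coeff μ gstar = coeff μ q := by
    intro μ hμ
    have h1 : coeff μ gstar = ∑ i, coeff μ (d i * g' i) := by
      rw [hgsdef, coeff_sum]
    have h2 : coeff μ q = ∑ i, coeff μ (c i * leadingPart P (g' i)) := by
      rw [← hsum, coeff_sum]
      apply Finset.sum_congr rfl
      intro i _
      rw [smul_eq_mul, hg'L]
    rw [h1, h2]
    apply Finset.sum_congr rfl
    intro i _
    by_cases hgi : g' i = 0
    · have hLz : leadingPart P (0 : MvPolynomial (Fin n) k) = 0 := by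
        rw [leadingPart]
        simp [MvPolynomial.support_zero]
      rw [hgi, mul_zero, hLz, mul_zero]
    · exact key_coeff P γ hgi (c i) hμ
  -- claim 2 : all monomials of gstar are ≤ γ
  have claim2 : ∀ b ∈ gstar.support, ¬ P.lt γ b := by
    intro b hb hlt
    have : coeff b gstar ≠ 0 := MvPolynomial.mem_support_iff.1 hb
    rw [hgsdef, coeff_sum] at this
    obtain ⟨i, _, hi⟩ := Finset.exists_ne_zero_of_sum_ne_zero this
    have hbmem : b ∈ (d i * g' i).support := MvPolynomial.mem_support_iff.2 hi
    have := MvPolynomial.support_mul (d i) (g' i) hbmem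
    rw [Finset.mem_add] at this
    obtain ⟨b₁, hb₁, b₂, hb₂, rfl⟩ := this
    have hgi : g' i ≠ 0 := by
      intro h; rw [h] at hb₂; simp [MvPolynomial.support_zero] at hb₂
    obtain ⟨heqv, -⟩ := mem_support_restr hb₁
    -- P.lt γ (b₁ + b₂), γ ~ b₁ + lm g' i ⇒ P.lt (b₁ + lm) (b₁ + b₂) ⇒ P.lt lm b₂
    have hlt2 : P.lt (b₁ + lmO P (g' i)) (b₁ + b₂) := P.lt_of_eqv_lt heqv hlt
    rw [add_comm b₁ (lmO P (g' i)), add_comm b₁ b₂] at hlt2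
    exact lmO_is_P_max P hgi b₂ hb₂ (P.cancel b₁ hlt2)
  -- coefficient at γ
  have hcoeffγ : coeff γ gstar = lcO P p := by
    rw [claim1 γ (P.eqv_refl γ), hqdef, coeff_leadingPart,
      if_pos ⟨lmO_mem P hp0, lmO_is_P_max P hp0⟩]
    rfl
  have hγmem : γ ∈ gstar.support := by
    rw [MvPolynomial.mem_support_iff, hcoeffγ]
    exact lcO_ne_zero P hp0
  have hgs0 : gstar ≠ 0 := by
    intro h; rw [h] at hγmem; simp [MvPolynomial.support_zero] at hγmem
  -- γ is the Ord-leading monomial of gstar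
  have hlm : lmO P gstar = γ := by
    symm
    apply lmO_unique P hgs0 hγmem
    intro b hb hne
    by_cases hPlt : P.lt b γ
    · exact P.lt_Ord hPlt
    · have heqv : P.eqv b γ := ⟨hPlt, claim2 b hb⟩
      have hcb : coeff b gstar = coeff b q := claim1 b heqv
      have hbq : b ∈ q.support := by
        rw [MvPolynomial.mem_support_iff, ← hcb]
        exact MvPolynomial.mem_support_iff.1 hb
      have hlmq : lmO P q = γ := by rw [hqdef, hγdef]; exact lmO_leadingPart P hp0
      have := lmO_max P hq0 b hbq (by rw [hlmq]; exact hne)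
      rwa [hlmq] at this
  refine ⟨gstar, hgsA, hgs0, ?_, ?_⟩
  · rw [hlm, hγdef]
  · rw [lcO, hlm, hcoeffγ, lcO]

end PartD

----------------------------------------------------------------
-- Part E : finite family of divisors
----------------------------------------------------------------

section PartE

variable (P : MonomialPreorder n)

lemma exists_finset_span_eq {S : Set (MvPolynomial (Fin n) k)} :
    ∃ T : Finset (MvPolynomial (Fin n) k), ↑T ⊆ S ∧
      Ideal.span (↑T : Set (MvPolynomial (Fin n) k)) = Ideal.span S := by
  classical
  have hfg : (Ideal.span S).FG := IsNoetherian.noetherian _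
  obtain ⟨G, hG⟩ := hfg
  have hmem : ∀ y : G, (y : MvPolynomial (Fin n) k) ∈ Ideal.span S := by
    intro y
    rw [← hG]
    exact Ideal.subset_span y.2
  choose T hTsub hTmem using fun y : G => Submodule.mem_span_finite_of_mem_span (hmem y)
  refine ⟨G.attach.biUnion (fun y => T y), ?_, ?_⟩
  · intro x hx
    rw [Finset.coe_biUnion] at hx
    simp only [Set.mem_iUnion, Finset.mem_coe] at hx
    obtain ⟨y, -, hx⟩ := hx
    exact hTsub y hx
  · apply le_antisymm
    · apply Ideal.span_mono
      intro x hx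
      rw [Finset.coe_biUnion] at hx
      simp only [Set.mem_iUnion, Finset.mem_coe] at hx
      obtain ⟨y, -, hx⟩ := hx
      exact hTsub y hx
    · rw [← hG, Ideal.span_le]
      intro y hy
      refine Submodule.span_mono ?_ (hTmem ⟨y, hy⟩)
      intro x hx
      rw [Finset.coe_biUnion]
      simp only [Set.mem_iUnion, Finset.mem_coe]
      exact ⟨⟨y, hy⟩, Finset.mem_attach _ _, hx⟩

theorem exists_gens (J' I' : Ideal (MvPolynomial (Fin n) k))
    (htrans : ∀ p ∈ I', p ≠ 0 → ∃ g ∈ J', g ≠ 0 ∧ lmO P g = lmO P p) :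
    ∃ G : Finset (MvPolynomial (Fin n) k), (∀ g ∈ G, g ∈ J' ∧ g ≠ 0) ∧
      ∀ p ∈ I', p ≠ 0 → ∃ g ∈ G, g ≠ 0 ∧ lmO P g ≤ lmO P p := by
  classical
  set LM : Set (Fin n →₀ ℕ) := {m | ∃ p, p ∈ I' ∧ p ≠ 0 ∧ lmO P p = m} with hLM
  obtain ⟨T, hTsub, hTspan⟩ :=
    exists_finset_span_eq (S := (fun m => monomial m (1:k)) '' LM)
  have hT : ∀ t : T, ∃ g, g ∈ J' ∧ g ≠ 0 ∧
      monomial (lmO P g) (1:k) = (t : MvPolynomial (Fin n) k) := by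
    intro t
    obtain ⟨m, hm, hmt⟩ := hTsub t.2
    obtain ⟨p, hpI, hp0, hpm⟩ := hm
    obtain ⟨g, hgJ, hg0, hglm⟩ := htrans p hpI hp0
    exact ⟨g, hgJ, hg0, by rw [hglm, hpm]; exact hmt⟩
  choose gfun hgJ hg0 hgt using hT
  refine ⟨T.attach.image gfun, ?_, ?_⟩
  · intro g hg
    obtain ⟨t, -, rfl⟩ := Finset.mem_image.1 hg
    exact ⟨hgJ t, hg0 t⟩
  · intro p hpI hp0
    have hmem : monomial (lmO P p) (1:k) ∈
        Ideal.span ((fun m => monomial m (1:k)) '' LM) :=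
      Ideal.subset_span ⟨lmO P p, ⟨p, hpI, hp0, rfl⟩, rfl⟩
    rw [← hTspan] at hmem
    have hTeq : (↑T : Set (MvPolynomial (Fin n) k)) =
        (fun m => monomial m (1:k)) '' {m | (monomial m (1:k) : MvPolynomial (Fin n) k) ∈ T} := by
      ext t
      constructor
      · intro ht
        obtain ⟨m, -, hmt⟩ := hTsub ht
        refine ⟨m, ?_, hmt⟩
        show (monomial m (1:k) : MvPolynomial (Fin n) k) ∈ T
        simp only at hmt
        rw [hmt]; exact ht
      · rintro ⟨m, hm, rfl⟩; exact hm
    rw [hTeq] at hmem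
    have hsupp : lmO P p ∈ (monomial (lmO P p) (1:k) : MvPolynomial (Fin n) k).support := by
      rw [MvPolynomial.support_monomial, if_neg one_ne_zero]
      exact Finset.mem_singleton_self _
    obtain ⟨m, hmT, hmle⟩ := MvPolynomial.mem_ideal_span_monomial_image.1 hmem _ hsupp
    refine ⟨gfun ⟨monomial m 1, hmT⟩,
      Finset.mem_image_of_mem _ (Finset.mem_attach _ _), hg0 _, ?_⟩
    have heq : lmO P (gfun ⟨monomial m 1, hmT⟩) = m :=
      monomial_left_injective (R := k) one_ne_zero (hgt ⟨monomial m 1, hmT⟩)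
    rw [heq]; exact hmle

end PartE

----------------------------------------------------------------
-- Part F : Mora normal form recursion
----------------------------------------------------------------

section PartF

variable (P : MonomialPreorder n)

/-- degree of a monomial -/
def degM (m : Fin n →₀ ℕ) : ℕ := m.sum fun _ e => e

lemma degM_add (a b : Fin n →₀ ℕ) : degM (a + b) = degM a + degM b :=
  Finsupp.sum_add_index' (fun _ => rfl) (fun _ _ _ => rfl)

lemma degM_le_totalDegree {p : MvPolynomial (Fin n) k} {b : Fin n →₀ ℕ}
    (hb : b ∈ p.support) : degM b ≤ p.totalDegree := le_totalDegree hb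

lemma coord_le_degM (m : Fin n →₀ ℕ) (i : Fin n) : m i ≤ degM m := by
  by_cases h : m i = 0
  · rw [h]; exact Nat.zero_le _
  · exact Finset.single_le_sum (f := fun j => m j) (fun j _ => Nat.zero_le _)
      (Finsupp.mem_support_iff.2 h)

lemma degM_lmO_le {p : MvPolynomial (Fin n) k} (hp : p ≠ 0) :
    degM (lmO P p) ≤ p.totalDegree :=
  degM_le_totalDegree (lmO_mem P hp)

/-- the constant monomial `(d,…,d)` -/
noncomputable def constD (d : ℕ) : Fin n →₀ ℕ :=
  Finsupp.equivFunOnFinite.symm (fun _ => d)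

lemma constD_apply (d : ℕ) (i : Fin n) : constD (n := n) d i = d := rfl

open Classical in
noncomputable def mcard (d : ℕ) (m : Fin n →₀ ℕ) : ℕ :=
  ((Finset.Iic (constD (n := n) d)).filter (fun ν => P.Ord.lt ν m)).card

lemma mcard_lt (d : ℕ) {m m' : Fin n →₀ ℕ} (hlt : P.Ord.lt m' m) (hm' : ∀ i, m' i ≤ d) :
    mcard P d m' < mcard P d m := by
  classical
  apply Finset.card_lt_card
  rw [Finset.ssubset_iff_of_subset]
  · refine ⟨m', ?_, ?_⟩
    · rw [Finset.mem_filter]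
      refine ⟨Finset.mem_Iic.2 (Finsupp.le_def.2 (fun i => ?_)), hlt⟩
      rw [constD_apply]; exact hm' i
    · rw [Finset.mem_filter]
      rintro ⟨-, habs⟩
      exact P.Ord.irrefl _ habs
  · intro ν hν
    rw [Finset.mem_filter] at hν ⊢
    exact ⟨hν.1, P.Ord.trans hν.2 hlt⟩

/-- packing écart and leading monomial into `n+1` variables -/
noncomputable def pk (p : MvPolynomial (Fin n) k) : Fin (n+1) →₀ ℕ :=
  Finsupp.cons (totalDegree p - degM (lmO P p)) (lmO P p)

lemma pk_le {p q : MvPolynomial (Fin n) k} (h : pk P p ≤ pk P q) :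
    totalDegree p - degM (lmO P p) ≤ totalDegree q - degM (lmO P q) ∧ lmO P p ≤ lmO P q := by
  rw [Finsupp.le_def] at h
  constructor
  · have := h 0; rwa [pk, pk, Finsupp.cons_zero, Finsupp.cons_zero] at this
  · rw [Finsupp.le_def]; intro i
    have := h i.succ; rwa [pk, pk, Finsupp.cons_succ, Finsupp.cons_succ] at this

/-- the monomial ideal tracking the reducer set -/
noncomputable def ΛI (S : Finset (MvPolynomial (Fin n) k)) :
    Ideal (MvPolynomial (Fin (n+1)) k) :=
  Ideal.span ((fun m => MvPolynomial.monomial m (1:k)) ''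
    (pk P '' (↑S : Set (MvPolynomial (Fin n) k))))

lemma ΛI_mono {S S' : Finset (MvPolynomial (Fin n) k)} (h : S ⊆ S') : ΛI P S ≤ ΛI P S' :=
  Ideal.span_mono (Set.image_mono (Set.image_mono h))

lemma ΛI_mem {S : Finset (MvPolynomial (Fin n) k)} {p : MvPolynomial (Fin n) k} (hp : p ∈ S) :
    MvPolynomial.monomial (pk P p) (1:k) ∈ ΛI P S :=
  Ideal.subset_span ⟨pk P p, ⟨p, hp, rfl⟩, rfl⟩

lemma ΛI_mem_elim {S : Finset (MvPolynomial (Fin n) k)} {μ : Fin (n+1) →₀ ℕ}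
    (h : MvPolynomial.monomial μ (1:k) ∈ ΛI P S) : ∃ p ∈ S, pk P p ≤ μ := by
  classical
  have hsupp : μ ∈ (MvPolynomial.monomial μ (1:k)).support := by
    rw [MvPolynomial.support_monomial, if_neg one_ne_zero]
    exact Finset.mem_singleton_self _
  obtain ⟨si, hsi, hle⟩ := MvPolynomial.mem_ideal_span_monomial_image.1 h μ hsupp
  obtain ⟨p, hp, rfl⟩ := hsi
  exact ⟨p, hp, hle⟩

/-- the single reduction step -/
lemma reduce_step {f' h : MvPolynomial (Fin n) k} (hf' : f' ≠ 0) (hh : h ≠ 0)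
    (hdvd : lmO P h ≤ lmO P f') :
    (∀ b ∈ (f' - monomial (lmO P f' - lmO P h) (lcO P f' / lcO P h) * h).support,
       P.Ord.lt b (lmO P f')) ∧
    totalDegree (f' - monomial (lmO P f' - lmO P h) (lcO P f' / lcO P h) * h) ≤
      max (totalDegree f') (degM (lmO P f' - lmO P h) + totalDegree h) := by
  classical
  set δ := lmO P f' - lmO P h with hδdef
  set C0 := lcO P f' / lcO P h with hC0def
  have hδ : δ + lmO P h = lmO P f' := tsub_add_cancel_of_le hdvd
  have hC0 : C0 ≠ 0 := div_ne_zero (lcO_ne_zero P hf') (lcO_ne_zero P hh)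
  have htop : coeff (lmO P f') (monomial δ C0 * h) = lcO P f' := by
    rw [← hδ, coeff_monomial_mul]
    rw [hC0def]
    exact div_mul_cancel₀ _ (lcO_ne_zero P hh)
  constructor
  · intro b hb
    have hbne : b ≠ lmO P f' := by
      rintro rfl
      have := MvPolynomial.mem_support_iff.1 hb
      rw [MvPolynomial.coeff_sub, htop] at this
      exact this (sub_self _)
    have hcb := MvPolynomial.mem_support_iff.1 hb
    rw [MvPolynomial.coeff_sub] at hcb
    have : coeff b f' ≠ 0 ∨ coeff b (monomial δ C0 * h) ≠ 0 := by
      by_contra hc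
      push_neg at hc
      rw [hc.1, hc.2, sub_zero] at hcb
      exact hcb rfl
    rcases this with hb1 | hb2
    · exact lmO_max P hf' b (MvPolynomial.mem_support_iff.2 hb1) hbne
    · have hbmem : b ∈ (monomial δ C0 * h).support := MvPolynomial.mem_support_iff.2 hb2
      have := MvPolynomial.support_mul _ _ hbmem
      rw [Finset.mem_add] at this
      obtain ⟨b₁, hb₁, b₂, hb₂, rfl⟩ := this
      rw [MvPolynomial.support_monomial, if_neg hC0, Finset.mem_singleton] at hb₁
      subst hb₁
      rcases eq_or_ne b₂ (lmO P h) with rfl | hb₂ne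
      · exact absurd hδ hbne
      · have := lmO_max P hh b₂ hb₂ hb₂ne
        have h2 := P.Ord.compat δ this
        rwa [add_comm b₂ δ, add_comm (lmO P h) δ, hδ] at h2
  · rw [sub_eq_add_neg]
    refine le_trans (totalDegree_add _ _) ?_
    rw [totalDegree_neg]
    apply max_le_max (le_refl _)
    refine le_trans (totalDegree_mul _ _) ?_
    rw [totalDegree_monomial _ hC0]
    rfl

/-- unit certificate update -/
lemma unit_update {u' uh : MvPolynomial (Fin n) k}
    (hu' : leadingPart P.Ord u' = 1) (huh : leadingPart P.Ord uh = 1)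
    {δ : Fin n →₀ ℕ} (hδ : P.Ord.lt δ 0) (C0 : k) :
    leadingPart P.Ord (u' - monomial δ C0 * uh) = 1 := by
  classical
  obtain ⟨hu'0, hu'lt⟩ := leadingPart_Ord_one_elim P hu'
  obtain ⟨huh0, huhlt⟩ := leadingPart_Ord_one_elim P huh
  have hmonlt : ∀ b ∈ (monomial δ C0 * uh).support, P.Ord.lt b 0 := by
    intro b hb
    have := MvPolynomial.support_mul _ _ hb
    rw [Finset.mem_add] at this
    obtain ⟨b₁, hb₁, b₂, hb₂, rfl⟩ := this
    have hb₁' : b₁ = δ := by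
      rw [MvPolynomial.support_monomial] at hb₁
      by_cases hC : C0 = 0
      · rw [if_pos hC] at hb₁; exact absurd hb₁ (Finset.notMem_empty _)
      · rw [if_neg hC, Finset.mem_singleton] at hb₁; exact hb₁
    subst hb₁'
    rcases eq_or_ne b₂ 0 with rfl | hb₂ne
    · rw [add_zero]; exact hδ
    · have h1 := huhlt b₂ hb₂ hb₂ne
      have h2 := P.Ord.compat b₁ h1
      rw [add_comm b₂ b₁, add_comm (0 : Fin n →₀ ℕ) b₁, add_zero] at h2
      exact P.Ord.trans h2 hδ
  apply leadingPart_Ord_one_of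
  · rw [MvPolynomial.coeff_sub, hu'0]
    have : coeff 0 (monomial δ C0 * uh) = 0 := by
      by_contra hc
      have := hmonlt 0 (MvPolynomial.mem_support_iff.2 hc)
      exact P.Ord.irrefl 0 (by
        have h0 : ¬ P.Ord.lt 0 (0 : Fin n →₀ ℕ) := P.Ord.irrefl 0
        exact this)
    rw [this, sub_zero]
  · intro b hb hbne
    have := MvPolynomial.support_sub (Fin n) u' (monomial δ C0 * uh) hb
    rw [Finset.mem_union] at this
    rcases this with h1 | h1
    · exact hu'lt b h1 hbne
    · exact hmonlt b h1

end PartF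

----------------------------------------------------------------
-- Part G : the main recursion
----------------------------------------------------------------

section PartG

variable (P : MonomialPreorder n)

theorem mora_main [DecidableEq (MvPolynomial (Fin n) k)]
    (I' : Ideal (MvPolynomial (Fin n) k))
    (f : MvPolynomial (Fin n) k) (hf : f ∈ I')
    (G : Finset (MvPolynomial (Fin n) k))
    (hG0 : ∀ g ∈ G, g ≠ 0) (hGI : ∀ g ∈ G, g ∈ I')
    (hdom : ∀ p ∈ I', p ≠ 0 → ∃ g ∈ G, g ≠ 0 ∧ lmO P g ≤ lmO P p) :
    ∀ (Lam : Ideal (MvPolynomial (Fin (n+1)) k)) (E : Finset (MvPolynomial (Fin n) k)),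
      ΛI P (G ∪ E) = Lam →
      (∀ h ∈ E, h ≠ 0 ∧ ∃ u w, leadingPart P.Ord u = 1 ∧ h = u * f - w ∧
          w ∈ Ideal.span (↑G : Set (MvPolynomial (Fin n) k))) →
      ∀ (cnt : ℕ) (d : ℕ) (f' u' w' : MvPolynomial (Fin n) k),
        leadingPart P.Ord u' = 1 → f' = u' * f - w' →
        w' ∈ Ideal.span (↑G : Set (MvPolynomial (Fin n) k)) →
        f' ≠ 0 → totalDegree f' ≤ d →
        (∀ h ∈ E, P.Ord.lt (lmO P f') (lmO P h)) →
        mcard P d (lmO P f') < cnt →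
        ∃ u w, leadingPart P.Ord u = 1 ∧ u * f = w ∧
          w ∈ Ideal.span (↑G : Set (MvPolynomial (Fin n) k)) := by
  classical
  intro Lam
  induction Lam using IsWellFounded.induction
      (r := (· > · : Ideal (MvPolynomial (Fin (n+1)) k) → Ideal (MvPolynomial (Fin (n+1)) k) → Prop)) with
  | ind Lam IH_outer =>
  intro E hΛ hE cnt
  induction cnt using Nat.strong_induction_on with
  | _ cnt IH_inner =>
  intro d f' u' w' hu' hf'e hw' hf'0 hdeg hEbig hcnt
  have hJ0I : Ideal.span (↑G : Set (MvPolynomial (Fin n) k)) ≤ I' :=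
    Ideal.span_le.2 (fun g hg => hGI g hg)
  have hf'I : f' ∈ I' := by
    rw [hf'e]
    exact Submodule.sub_mem _ (I'.mul_mem_left u' hf) (hJ0I hw')
  obtain ⟨g₀, hg₀G, hg₀0, hg₀dvd⟩ := hdom f' hf'I hf'0
  by_cases hcase : ∃ h ∈ G ∪ E, h ≠ 0 ∧ lmO P h ≤ lmO P f' ∧
      totalDegree h + degM (lmO P f') ≤ d + degM (lmO P h)
  · -- Case 1 : reduction at the same level d
    obtain ⟨h, hhT, hh0, hdvd, hec⟩ := hcase
    obtain ⟨hred, hreddeg⟩ := reduce_step P hf'0 hh0 hdvd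
    set δ := lmO P f' - lmO P h with hδdef
    set C0 := lcO P f' / lcO P h with hC0def
    set f'' := f' - monomial δ C0 * h with hf''def
    have hδadd : δ + lmO P h = lmO P f' := tsub_add_cancel_of_le hdvd
    -- degree bound for f''
    have hdegδ : degM δ + degM (lmO P h) = degM (lmO P f') := by
      rw [← degM_add, hδadd]
    have hdeg'' : totalDegree f'' ≤ d := by
      refine le_trans hreddeg (max_le hdeg ?_)
      have h1 : degM (lmO P h) ≤ totalDegree h := degM_lmO_le P hh0
      omega
    -- new certificate
    have hcert : ∃ u'' w'', leadingPart P.Ord u'' = 1 ∧ f'' = u'' * f - w'' ∧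
        w'' ∈ Ideal.span (↑G : Set (MvPolynomial (Fin n) k)) := by
      rcases Finset.mem_union.1 hhT with hhG | hhE
      · refine ⟨u', w' + monomial δ C0 * h, hu', ?_, ?_⟩
        · rw [hf''def, hf'e]; ring
        · exact Submodule.add_mem _ hw'
            (Ideal.mul_mem_left _ _ (Ideal.subset_span hhG))
      · obtain ⟨-, uh, wh, huh, hhe, hwh⟩ := hE h hhE
        have hδ0 : P.Ord.lt δ 0 := by
          have := hEbig h hhE
          rw [← hδadd] at this
          have h2 : P.Ord.lt (δ + lmO P h) (0 + lmO P h) := by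
            rwa [zero_add]
          exact P.Ord.cancel _ h2
        refine ⟨u' - monomial δ C0 * uh, w' - monomial δ C0 * wh,
          unit_update P hu' huh hδ0 C0, ?_, ?_⟩
        · rw [hf''def, hf'e, hhe]; ring
        · exact Submodule.sub_mem _ hw' (Ideal.mul_mem_left _ _ hwh)
    obtain ⟨u'', w'', hu'', hf''e, hw''⟩ := hcert
    by_cases hf''0 : f'' = 0
    · refine ⟨u'', w'', hu'', ?_, hw''⟩
      rw [hf''0] at hf''e
      exact sub_eq_zero.1 hf''e.symm
    · -- recurse with smaller measure
      have hltlm : P.Ord.lt (lmO P f'') (lmO P f') :=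
        hred _ (lmO_mem P hf''0)
      have hcoord : ∀ i, lmO P f'' i ≤ d := by
        intro i
        exact le_trans (coord_le_degM _ i) (le_trans (degM_lmO_le P hf''0) hdeg'')
      have hmlt : mcard P d (lmO P f'') < mcard P d (lmO P f') :=
        mcard_lt P d hltlm hcoord
      exact IH_inner (mcard P d (lmO P f')) hcnt d f'' u'' w'' hu'' hf''e hw'' hf''0
        hdeg'' (fun h' hh' => P.Ord.trans hltlm (hEbig h' hh')) hmlt
  · -- Case 2 : insert f' into E and jump to a higher level d'
    have hg₀ec : ¬ (totalDegree g₀ + degM (lmO P f') ≤ d + degM (lmO P g₀)) := by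
      intro hc
      exact hcase ⟨g₀, Finset.mem_union_left _ hg₀G, hg₀0, hg₀dvd, hc⟩
    set d' := totalDegree g₀ + degM (lmO P f') - degM (lmO P g₀) with hd'def
    have hg₀deg : degM (lmO P g₀) ≤ totalDegree g₀ := degM_lmO_le P hg₀0
    have hdd' : d < d' := by omega
    set E' := insert f' E with hE'def
    -- the tracking ideal strictly increases
    have hΛle : ΛI P (G ∪ E) ≤ ΛI P (G ∪ E') :=
      ΛI_mono P (Finset.union_subset_union (le_refl G)
        (Finset.subset_insert f' E))
    have hΛne : ΛI P (G ∪ E) ≠ ΛI P (G ∪ E') := by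
      intro heq
      have hmem : MvPolynomial.monomial (pk P f') (1:k) ∈ ΛI P (G ∪ E') :=
        ΛI_mem P (Finset.mem_union_right _ (Finset.mem_insert_self f' E))
      rw [← heq] at hmem
      obtain ⟨p, hpGE, hple⟩ := ΛI_mem_elim P hmem
      have hp0 : p ≠ 0 := by
        rcases Finset.mem_union.1 hpGE with h1 | h1
        · exact hG0 p h1
        · exact (hE p h1).1
      obtain ⟨hpe, hplm⟩ := pk_le P hple
      -- p is a divider with small écart : contradiction
      apply hcase
      refine ⟨p, hpGE, hp0, hplm, ?_⟩
      have h1 : degM (lmO P p) ≤ totalDegree p := degM_lmO_le P hp0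
      have h2 : degM (lmO P f') ≤ totalDegree f' := degM_lmO_le P hf'0
      omega
    have hΛlt : ΛI P (G ∪ E') > Lam := by
      rw [← hΛ]
      exact lt_of_le_of_ne hΛle hΛne
    -- reduce by g₀
    obtain ⟨hred, hreddeg⟩ := reduce_step P hf'0 hg₀0 hg₀dvd
    set δ := lmO P f' - lmO P g₀ with hδdef
    set C0 := lcO P f' / lcO P g₀ with hC0def
    set f'' := f' - monomial δ C0 * g₀ with hf''def
    have hδadd : δ + lmO P g₀ = lmO P f' := tsub_add_cancel_of_le hg₀dvd
    have hdegδ : degM δ + degM (lmO P g₀) = degM (lmO P f') := by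
      rw [← degM_add, hδadd]
    have hdeg'' : totalDegree f'' ≤ d' := by
      refine le_trans hreddeg (max_le (le_of_lt (lt_of_le_of_lt hdeg hdd')) ?_)
      omega
    have hw''mem : w' + monomial δ C0 * g₀ ∈
        Ideal.span (↑G : Set (MvPolynomial (Fin n) k)) :=
      Submodule.add_mem _ hw' (Ideal.mul_mem_left _ _ (Ideal.subset_span hg₀G))
    have hf''e : f'' = u' * f - (w' + monomial δ C0 * g₀) := by
      rw [hf''def, hf'e]; ring
    by_cases hf''0 : f'' = 0
    · refine ⟨u', w' + monomial δ C0 * g₀, hu', ?_, hw''mem⟩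
      rw [hf''0] at hf''e
      exact sub_eq_zero.1 hf''e.symm
    · have hltlm : P.Ord.lt (lmO P f'') (lmO P f') :=
        hred _ (lmO_mem P hf''0)
      have hE' : ∀ h ∈ E', h ≠ 0 ∧ ∃ u w, leadingPart P.Ord u = 1 ∧ h = u * f - w ∧
          w ∈ Ideal.span (↑G : Set (MvPolynomial (Fin n) k)) := by
        intro h hh
        rcases Finset.mem_insert.1 hh with rfl | hh
        · exact ⟨hf'0, u', w', hu', hf'e, hw'⟩
        · exact hE h hh
      refine IH_outer (ΛI P (G ∪ E')) hΛlt E' rfl hE'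
        (mcard P d' (lmO P f'') + 1) d' f'' u' (w' + monomial δ C0 * g₀)
        hu' hf''e hw''mem hf''0 hdeg'' ?_ (Nat.lt_succ_self _)
      intro h hh
      rcases Finset.mem_insert.1 hh with rfl | hh
      · exact hltlm
      · exact P.Ord.trans hltlm (hEbig h hh)

end PartG

----------------------------------------------------------------
-- Part H : assembly
----------------------------------------------------------------


open MonomialPreorder

lemma leadingIdeal_eq_poly (P : MonomialPreorder n) (I : Ideal (Loc k P)) :
    leadingIdeal P (I : Set (Loc k P)) =
      leadingIdealPoly P
        ((Ideal.comap (algebraMap (MvPolynomial (Fin n) k) (Loc k P)) I :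
          Ideal (MvPolynomial (Fin n) k)) : Set (MvPolynomial (Fin n) k)) := by
  unfold leadingIdeal leadingIdealWrt leadingIdealPoly
  congr 1
  ext q
  constructor
  · rintro ⟨fl, hfl, u, p, hu, hι, rfl⟩
    refine ⟨p, ?_, rfl⟩
    show algebraMap (MvPolynomial (Fin n) k) (Loc k P) p ∈ I
    rw [hι]
    exact I.mul_mem_left _ hfl
  · rintro ⟨p, hp, rfl⟩
    exact ⟨algebraMap (MvPolynomial (Fin n) k) (Loc k P) p, hp, 1, p,
      leadingPart_one P, by rw [map_one, one_mul], rfl⟩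


/-- If J ⊆ I are ideals of k[X]_< with L_<(J) = L_<(I), then J = I. -/
theorem eq_of_leadingIdeal_eq (n : ℕ) (k : Type*) [Field k] (P : MonomialPreorder n)
    (J I : Ideal (Loc k P)) (hJI : J ≤ I)
    (hL : leadingIdeal P (J : Set (Loc k P)) = leadingIdeal P (I : Set (Loc k P))) :
    J = I := by
  classical
  set ι := algebraMap (MvPolynomial (Fin n) k) (Loc k P) with hιdef
  apply le_antisymm hJI
  set J' := Ideal.comap ι J with hJ'def
  set I' := Ideal.comap ι I with hI'def
  have hLpoly : leadingIdealPoly P (↑J' : Set (MvPolynomial (Fin n) k)) =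
      leadingIdealPoly P (↑I' : Set (MvPolynomial (Fin n) k)) := by
    rw [hJ'def, hI'def, hιdef, ← leadingIdeal_eq_poly, ← leadingIdeal_eq_poly, hL]
  have hJ'I' : J' ≤ I' := Ideal.comap_mono hJI
  have htrans : ∀ p ∈ I', p ≠ 0 → ∃ g ∈ J', g ≠ 0 ∧ lmO P g = lmO P p := by
    intro p hp hp0
    have hpmem : leadingPart P p ∈
        leadingIdealPoly P (↑I' : Set (MvPolynomial (Fin n) k)) :=
      Ideal.subset_span ⟨p, hp, rfl⟩
    rw [← hLpoly] at hpmem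
    obtain ⟨g, hgJ, hg0, hlm, -⟩ := exists_same_leading P J' hp0 hpmem
    exact ⟨g, hgJ, hg0, hlm⟩
  obtain ⟨G, hGprop, hdom⟩ := exists_gens P J' I' htrans
  have hGJ' : Ideal.span (↑G : Set (MvPolynomial (Fin n) k)) ≤ J' :=
    Ideal.span_le.2 (fun g hg => (hGprop g hg).1)
  have hIJ' : I' ≤ J' := by
    intro p hp
    by_cases hp0 : p = 0
    · rw [hp0]; exact zero_mem _
    obtain ⟨u, w, hu, huw, hwmem⟩ := mora_main P I' p hp G
      (fun g hg => (hGprop g hg).2)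
      (fun g hg => hJ'I' ((hGprop g hg).1))
      hdom
      (ΛI P (G ∪ ∅)) ∅ rfl
      (fun h hh => absurd hh (Finset.notMem_empty h))
      (mcard P (totalDegree p) (lmO P p) + 1) (totalDegree p) p 1 0
      (leadingPart_one P.Ord)
      (by ring)
      (zero_mem _)
      hp0
      (le_refl _)
      (fun h hh => absurd hh (Finset.notMem_empty h))
      (Nat.lt_succ_self _)
    -- u is a unit in the localization
    have huP : leadingPart P u = 1 := leadingPart_one_of_Ord_one P hu
    have huS : u ∈ Sles k P := Submonoid.subset_closure huP
    have hunit : IsUnit (ι u) :=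
      IsLocalization.map_units (M := Sles k P) (Loc k P) ⟨u, huS⟩
    have hwJ' : w ∈ J' := hGJ' hwmem
    have hmem : ι u * ι p ∈ J := by
      rw [← map_mul, huw]
      exact hwJ'
    obtain ⟨v, hv⟩ := hunit
    show ι p ∈ J
    have : ι p = ↑v⁻¹ * (ι u * ι p) := by
      rw [← hv, ← mul_assoc, Units.inv_mul, one_mul]
    rw [this]
    exact J.mul_mem_left _ hmem
  calc I = Ideal.map ι (Ideal.comap ι I) :=
        (IsLocalization.map_comap (Sles k P) (Loc k P) I).symm
    _ ≤ Ideal.map ι J' := Ideal.map_mono hIJ'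
    _ = J := IsLocalization.map_comap (Sles k P) (Loc k P) J
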